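/- arXiv:2211.10635 — 2 statements merged into one kernel-verified Lean document; each statement's English description precedes it below -/
import Mathlib

section
/- Let n ≥ 1 and let μ₁,…,μₙ, λ₁,…,λₙ be 2n pairwise distinct complex numbers with associated values v₁,…,vₙ, w₁,…,wₙ ∈ ℂ. Define the Loewner matrix 𝕃 ∈ ℂ^{n×n} by 𝕃ᵢⱼ = (vᵢ − wⱼ)/(μᵢ − λⱼ), the shifted Loewner matrix 𝕃ₛ ∈ ℂ^{n×n} by (𝕃ₛ)ᵢⱼ = (μᵢ vᵢ − λⱼ wⱼ)/(μᵢ − λⱼ), the column vector 𝕍 = (v₁,…,vₙ)ᵀ and the row vector 𝕎 = (w₁,…,wₙ). If for every point s in {μ₁,…,μₙ} ∪ {λ₁,…,λₙ} the matrix 𝕃ₛ − s𝕃 is invertible, then the rational function H(s) = 𝕎(𝕃ₛ − s𝕃)⁻¹𝕍 interpolates the data: H(μᵢ) = vᵢ for all i = 1,…,n and H(λⱼ) = wⱼ for all j = 1,…,n. -/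
open Matrix

/-- **Loewner framework interpolation.** Given `2n` pairwise distinct interpolation
points `μ i`, `λ j` with data values `v i`, `w j`, if the Loewner pencil
`𝕃ₛ - s • 𝕃` is invertible at every interpolation point, then the rational function
`H(s) = 𝕎 (𝕃ₛ - s 𝕃)⁻¹ 𝕍` interpolates the data. -/
theorem loewner_interpolation
    (n : ℕ) (hn : 1 ≤ n)
    (μ lam : Fin n → ℂ) (v w : Fin n → ℂ)
    (hdist : Function.Injective (Sum.elim μ lam : Fin n ⊕ Fin n → ℂ))
    (L Ls : Matrix (Fin n) (Fin n) ℂ)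
    (hL : ∀ i j, L i j = (v i - w j) / (μ i - lam j))
    (hLs : ∀ i j, Ls i j = (μ i * v i - lam j * w j) / (μ i - lam j))
    (hreg : ∀ s ∈ Set.range μ ∪ Set.range lam, IsUnit (Ls - s • L).det)
    (H : ℂ → ℂ)
    (hH : ∀ s, H s = w ⬝ᵥ ((Ls - s • L)⁻¹).mulVec v) :
    (∀ i, H (μ i) = v i) ∧ (∀ j, H (lam j) = w j) := by
  have hne : ∀ i j, μ i - lam j ≠ 0 := by
    intro i j h
    have : Sum.elim μ lam (Sum.inl i) = Sum.elim μ lam (Sum.inr j) := by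
      simpa using sub_eq_zero.mp h
    exact absurd (hdist this) (by simp)
  constructor
  · intro i
    set M := Ls - μ i • L with hM
    have hdet : IsUnit M.det := hreg _ (Or.inl ⟨i, rfl⟩)
    -- row i of M is w
    have hrow : M i = w := by
      funext j
      have h := hne i j
      rw [hM, Matrix.sub_apply, Matrix.smul_apply, hL, hLs, smul_eq_mul]
      field_simp
      ring
    have hvm : w ᵥ* M⁻¹ = Pi.single i 1 := by
      have : (Pi.single i 1 : Fin n → ℂ) ᵥ* M = w := by
        rw [single_one_vecMul]; exact hrow
      calc w ᵥ* M⁻¹ = ((Pi.single i 1 : Fin n → ℂ) ᵥ* M) ᵥ* M⁻¹ := by rw [this]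
        _ = (Pi.single i 1 : Fin n → ℂ) ᵥ* (M * M⁻¹) := by rw [vecMul_vecMul]
        _ = _ := by rw [Matrix.mul_nonsing_inv _ hdet, vecMul_one]
    rw [hH, dotProduct_mulVec, hvm, single_dotProduct, one_mul]
  · intro j
    set M := Ls - lam j • L with hM
    have hdet : IsUnit M.det := hreg _ (Or.inr ⟨j, rfl⟩)
    have hcol : ∀ i, M i j = v i := by
      intro i
      have h := hne i j
      rw [hM, Matrix.sub_apply, Matrix.smul_apply, hL, hLs, smul_eq_mul]
      field_simp
      ring
    have hmv : M⁻¹ *ᵥ v = Pi.single j 1 := by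
      have : M *ᵥ (Pi.single j 1 : Fin n → ℂ) = v := by
        funext i
        simp [mulVec_single, hcol i]
      calc M⁻¹ *ᵥ v = M⁻¹ *ᵥ (M *ᵥ (Pi.single j 1 : Fin n → ℂ)) := by rw [this]
        _ = (M⁻¹ * M) *ᵥ (Pi.single j 1 : Fin n → ℂ) := by rw [mulVec_mulVec]
        _ = _ := by rw [Matrix.nonsing_inv_mul _ hdet, one_mulVec]
    rw [hH, hmv, dotProduct_single, mul_one]
end

section
/- Let g = p/q be a rational function over ℂ with p, q coprime polynomials, q ≠ 0, and McMillan degree d = max(deg p, deg q). Let μ₁,…,μₙ, λ₁,…,λₙ be 2n pairwise distinct complex numbers, none of which is a root of q, and set vᵢ = g(μᵢ), wⱼ = g(λⱼ). Define the Loewner matrix 𝕃 ∈ ℂ^{n×n} by 𝕃ᵢⱼ = (vᵢ − wⱼ)/(μᵢ − λⱼ). If n ≥ d, then rank 𝕃 = d. -/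
open Matrix Polynomial

/-- **Main property of the Loewner matrix** (Antoulas–Anderson). If the data are samples
of a rational function `g = p/q` of McMillan degree `d`, taken at `2n ≥ 2d` pairwise
distinct points that are not poles of `g`, then the Loewner matrix has rank exactly `d`. -/
theorem loewner_rank_eq_mcmillan_degree
    (n : ℕ) (p q : Polynomial ℂ) (hq : q ≠ 0) (hcop : IsCoprime p q)
    (d : ℕ) (hd : d = max p.natDegree q.natDegree)
    (μ lam : Fin n → ℂ)
    (hdist : Function.Injective (Sum.elim μ lam : Fin n ⊕ Fin n → ℂ))
    (hμpole : ∀ i, q.eval (μ i) ≠ 0) (hlampole : ∀ j, q.eval (lam j) ≠ 0)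
    (v w : Fin n → ℂ)
    (hv : ∀ i, v i = p.eval (μ i) / q.eval (μ i))
    (hw : ∀ j, w j = p.eval (lam j) / q.eval (lam j))
    (L : Matrix (Fin n) (Fin n) ℂ)
    (hL : ∀ i j, L i j = (v i - w j) / (μ i - lam j))
    (hn : d ≤ n) :
    L.rank = d := by
  classical
  rcases Nat.eq_zero_or_pos n with hn0 | hn0
  · subst hn0
    interval_cases d
    have : L.rank ≤ 0 := le_trans (Matrix.rank_le_card_width L) (by simp)
    omega
  have hμlaminj : Function.Injective lam := fun i j h => by
    have := @hdist (Sum.inr i) (Sum.inr j) (by simpa using h); simpa using this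
  have hμinj : Function.Injective μ := fun i j h => by
    have := @hdist (Sum.inl i) (Sum.inl j) (by simpa using h); simpa using this
  have hμlam : ∀ i j, μ i ≠ lam j := fun i j h => by
    have := @hdist (Sum.inl i) (Sum.inr j) (by simpa using h); simp at this
  -- nodal polynomials
  set Λ : Fin n → Polynomial ℂ := fun j => ∏ k ∈ Finset.univ.erase j, (X - C (lam k)) with hΛ
  have hΛeval : ∀ j x, (Λ j).eval x = ∏ k ∈ Finset.univ.erase j, (x - lam k) := by
    intro j x; rw [hΛ]; simp [eval_prod]
  have hΛdeg : ∀ j, (Λ j).natDegree = n - 1 := by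
    intro j
    rw [hΛ, natDegree_prod_of_monic _ _ fun k _ => monic_X_sub_C _]
    simp [natDegree_X_sub_C, Finset.card_erase_of_mem]
  have hΛj_ne : ∀ j, (Λ j).eval (lam j) ≠ 0 := by
    intro j
    rw [hΛeval, Finset.prod_ne_zero_iff]
    intro k hk
    rw [sub_ne_zero]
    exact fun h => (Finset.mem_erase.mp hk).1 (hμlaminj h.symm)
  have hΛμ_ne : ∀ j i, (Λ j).eval (μ i) ≠ 0 := by
    intro j i
    rw [hΛeval, Finset.prod_ne_zero_iff]
    intro k _
    rw [sub_ne_zero]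
    exact hμlam i k
  have hΛzero : ∀ j k, k ≠ j → (Λ j).eval (lam k) = 0 := by
    intro j k hkj
    rw [hΛeval]
    exact Finset.prod_eq_zero (Finset.mem_erase.mpr ⟨hkj, Finset.mem_univ k⟩) (by ring)
  -- full nodal polynomial
  set Λf : Polynomial ℂ := ∏ k, (X - C (lam k)) with hΛf
  have hΛf_split : ∀ j, Λf = (X - C (lam j)) * Λ j := by
    intro j; rw [hΛf, hΛ]
    exact (Finset.mul_prod_erase _ _ (Finset.mem_univ j)).symm
  have hΛfμ_ne : ∀ i, Λf.eval (μ i) ≠ 0 := by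
    intro i
    rw [hΛf]
    simp only [eval_prod, eval_sub, eval_X, eval_C]
    rw [Finset.prod_ne_zero_iff]
    intro k _
    rw [sub_ne_zero]; exact hμlam i k
  -- the key polynomial
  set N : (Fin n → ℂ) → Polynomial ℂ :=
    fun c => ∑ j, C (c j) * ((p - C (w j) * q) * Λ j) with hN
  have hsplit : ∀ c, N c =
      p * (∑ j, C (c j) * Λ j) - q * (∑ j, C (c j * w j) * Λ j) := by
    intro c
    rw [hN, Finset.mul_sum, Finset.mul_sum, ← Finset.sum_sub_distrib]
    refine Finset.sum_congr rfl fun j _ => by rw [C_mul]; ring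
  have key : ∀ c i, q.eval (μ i) * Λf.eval (μ i) * (L.mulVec c i) = (N c).eval (μ i) := by
    intro c i
    have hmv : L.mulVec c i = ∑ j, L i j * c j := by
      simp [Matrix.mulVec, dotProduct]
    rw [hmv, Finset.mul_sum, hN, eval_finset_sum]
    refine Finset.sum_congr rfl fun j _ => ?_
    rw [hL, hv]
    have h1 : Λf.eval (μ i) = (μ i - lam j) * (Λ j).eval (μ i) := by
      rw [hΛf_split j]; simp
    simp only [eval_mul, eval_sub, eval_C, h1]
    have h2 : μ i - lam j ≠ 0 := sub_ne_zero.mpr (hμlam i j)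
    have h3 := hμpole i
    field_simp
  have hNlam : ∀ c k, (N c).eval (lam k) = 0 := by
    intro c k
    rw [hN, eval_finset_sum]
    rw [Finset.sum_eq_single k]
    · have : p.eval (lam k) - w k * q.eval (lam k) = 0 := by
        rw [hw, div_mul_cancel₀ _ (hlampole k), sub_self]
      simp [this]
    · intro j _ hjk
      simp [hΛzero j k (Ne.symm hjk)]
    · simp
  have hNdeg : ∀ c, (N c).natDegree ≤ d + (n - 1) := by
    intro c
    refine natDegree_sum_le_of_forall_le _ _ fun j _ => ?_
    refine le_trans (natDegree_C_mul_le _ _) ?_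
    refine le_trans (natDegree_mul_le) ?_
    have h1 : (p - C (w j) * q).natDegree ≤ d := by
      refine le_trans (natDegree_sub_le _ _) ?_
      refine max_le (hd ▸ le_max_left _ _) ?_
      refine le_trans (natDegree_C_mul_le _ _) (hd ▸ le_max_right _ _)
    exact add_le_add h1 (le_of_eq (hΛdeg j))
  -- the parametrization of the kernel
  set Ψ : Polynomial.degreeLT ℂ (n - d) →ₗ[ℂ] (Fin n → ℂ) :=
    { toFun := fun t k => q.eval (lam k) * (t : Polynomial ℂ).eval (lam k) * ((Λ k).eval (lam k))⁻¹
      map_add' := by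
        intro s t; funext k
        simp only [Submodule.coe_add, eval_add, Pi.add_apply]
        ring
      map_smul' := by
        intro a t; funext k
        simp only [SetLike.val_smul, eval_smul, smul_eq_mul, RingHom.id_apply, Pi.smul_apply]
        ring } with hΨ
  -- eval of the two interpolation sums at the nodes
  have haeval : ∀ (c : Fin n → ℂ) k,
      (∑ j, C (c j) * Λ j).eval (lam k) = c k * (Λ k).eval (lam k) := by
    intro c k
    rw [eval_finset_sum, Finset.sum_eq_single k]
    · simp
    · intro j _ hjk
      simp [hΛzero j k (Ne.symm hjk)]
    · simp
  have hbeval : ∀ (c : Fin n → ℂ) k,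
      (∑ j, C (c j * w j) * Λ j).eval (lam k) = c k * w k * (Λ k).eval (lam k) := by
    intro c k
    rw [eval_finset_sum, Finset.sum_eq_single k]
    · simp
    · intro j _ hjk
      simp [hΛzero j k (Ne.symm hjk)]
    · simp
  have hadeg : ∀ (c : Fin n → ℂ), (∑ j, C (c j) * Λ j).natDegree ≤ n - 1 := by
    intro c
    refine natDegree_sum_le_of_forall_le _ _ fun j _ => ?_
    exact le_trans (natDegree_C_mul_le _ _) (le_of_eq (hΛdeg j))
  have hbdeg : ∀ (c : Fin n → ℂ), (∑ j, C (c j * w j) * Λ j).natDegree ≤ n - 1 := by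
    intro c
    refine natDegree_sum_le_of_forall_le _ _ fun j _ => ?_
    exact le_trans (natDegree_C_mul_le _ _) (le_of_eq (hΛdeg j))
  have hqd : q.natDegree ≤ d := hd ▸ le_max_right _ _
  have hpd : p.natDegree ≤ d := hd ▸ le_max_left _ _
  have hrange : LinearMap.range Ψ = LinearMap.ker L.mulVecLin := by
    apply le_antisymm
    · rintro c ⟨t, rfl⟩
      rw [LinearMap.mem_ker]
      rcases eq_or_ne (t : Polynomial ℂ) 0 with ht0 | ht0
      · have : t = 0 := Subtype.ext ht0
        rw [this, map_zero, map_zero]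
      have htdeg : (t : Polynomial ℂ).natDegree < n - d := by
        rw [natDegree_lt_iff_degree_lt ht0]
        exact Polynomial.mem_degreeLT.mp t.2
      set c : Fin n → ℂ := Ψ t with hc
      have hck : ∀ k, c k
          = q.eval (lam k) * (t : Polynomial ℂ).eval (lam k) * ((Λ k).eval (lam k))⁻¹ := fun k => rfl
      have ha : (∑ j, C (c j) * Λ j) = q * (t : Polynomial ℂ) := by
        rw [← sub_eq_zero]
        apply eq_zero_of_natDegree_lt_card_of_eval_eq_zero _ hμlaminj
        · intro k
          rw [eval_sub, haeval, hck k, eval_mul]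
          rw [mul_assoc, inv_mul_cancel₀ (hΛj_ne k), mul_one, sub_self]
        · refine lt_of_le_of_lt (natDegree_sub_le _ _) ?_
          have h1 := hadeg c
          have h2 : (q * (t : Polynomial ℂ)).natDegree ≤ n - 1 := by
            refine le_trans natDegree_mul_le ?_
            omega
          simp only [Fintype.card_fin]
          omega
      have hb : (∑ j, C (c j * w j) * Λ j) = p * (t : Polynomial ℂ) := by
        rw [← sub_eq_zero]
        apply eq_zero_of_natDegree_lt_card_of_eval_eq_zero _ hμlaminj
        · intro k
          rw [eval_sub, hbeval, hck k, eval_mul]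
          have h3 := hlampole k
          have h4 := hΛj_ne k
          rw [hw]
          field_simp
          ring
        · refine lt_of_le_of_lt (natDegree_sub_le _ _) ?_
          have h1 := hbdeg c
          have h2 : (p * (t : Polynomial ℂ)).natDegree ≤ n - 1 := by
            refine le_trans natDegree_mul_le ?_
            omega
          simp only [Fintype.card_fin]
          omega
      have hN0 : N c = 0 := by
        rw [hsplit, ha, hb]; ring
      funext i
      have hkey := key c i
      rw [hN0, eval_zero] at hkey
      have h5 : q.eval (μ i) * Λf.eval (μ i) ≠ 0 := mul_ne_zero (hμpole i) (hΛfμ_ne i)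
      have h6 : L.mulVec c i = 0 := by
        rcases mul_eq_zero.mp hkey with h | h
        · exact absurd h h5
        · exact h
      simpa [Matrix.mulVecLin_apply] using h6
    · intro c hc
      rw [LinearMap.mem_ker] at hc
      have hmv : L.mulVec c = 0 := by rwa [Matrix.mulVecLin_apply] at hc
      have hNc0 : N c = 0 := by
        apply eq_zero_of_natDegree_lt_card_of_eval_eq_zero _ hdist
        · rintro (i | k)
          · have hkey := key c i
            rw [show L.mulVec c i = 0 from congrFun hmv i, mul_zero] at hkey
            simpa using hkey.symm
          · simpa using hNlam c k
        · have := hNdeg c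
          simp only [Fintype.card_sum, Fintype.card_fin]
          omega
      have hab : p * (∑ j, C (c j) * Λ j) = q * (∑ j, C (c j * w j) * Λ j) := by
        have h := hsplit c
        rw [hNc0] at h
        exact (sub_eq_zero.mp h.symm)
      have hqa : q ∣ (∑ j, C (c j) * Λ j) :=
        hcop.symm.dvd_of_dvd_mul_left ⟨_, hab⟩
      obtain ⟨t, ht⟩ := hqa
      have hbt : (∑ j, C (c j * w j) * Λ j) = p * t := by
        apply mul_left_cancel₀ hq
        rw [← hab, ht]; ring
      have htmem : t ∈ Polynomial.degreeLT ℂ (n - d) := by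
        rw [Polynomial.mem_degreeLT]
        rcases eq_or_ne t 0 with rfl | ht0
        · rw [degree_zero]; exact WithBot.bot_lt_coe _
        · have hqt : q.natDegree + t.natDegree ≤ n - 1 := by
            rw [← natDegree_mul hq ht0, ← ht]; exact hadeg c
          have hdt : t.natDegree < n - d := by
            rcases eq_or_ne p 0 with rfl | hp0
            · have hu : IsUnit q := isCoprime_zero_left.mp hcop
              have hq0 : q.natDegree = 0 := natDegree_eq_zero_of_isUnit hu
              have hd0 : d = 0 := by rw [hd, hq0]; simp
              omega
            · have hpt : p.natDegree + t.natDegree ≤ n - 1 := by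
                rw [← natDegree_mul hp0 ht0, ← hbt]; exact hbdeg c
              have hdd : d + t.natDegree ≤ n - 1 := by
                rcases le_total p.natDegree q.natDegree with h | h
                · rw [hd, max_eq_right h]; omega
                · rw [hd, max_eq_left h]; omega
              omega
          rw [degree_eq_natDegree ht0]
          exact_mod_cast hdt
      refine ⟨⟨t, htmem⟩, ?_⟩
      funext k
      show q.eval (lam k) * t.eval (lam k) * ((Λ k).eval (lam k))⁻¹ = c k
      have h7 : c k * (Λ k).eval (lam k) = q.eval (lam k) * t.eval (lam k) := by
        rw [← haeval c k, ht, eval_mul]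
      rw [← h7, mul_assoc, mul_inv_cancel₀ (hΛj_ne k), mul_one]
  have hΨinj : Function.Injective Ψ := by
    rw [← LinearMap.ker_eq_bot] at *
    rw [LinearMap.ker_eq_bot']
    intro t ht
    have hval : ∀ k, (t : Polynomial ℂ).eval (lam k) = 0 := by
      intro k
      have h := congrFun ht k
      have h5 : ((Λ k).eval (lam k))⁻¹ ≠ 0 := inv_ne_zero (hΛj_ne k)
      have : q.eval (lam k) * (t : Polynomial ℂ).eval (lam k) * ((Λ k).eval (lam k))⁻¹ = 0 := h
      rcases mul_eq_zero.mp this with h' | h'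
      · rcases mul_eq_zero.mp h' with h'' | h''
        · exact absurd h'' (hlampole k)
        · exact h''
      · exact absurd h' h5
    have ht0 : (t : Polynomial ℂ) = 0 := by
      rcases eq_or_ne (t : Polynomial ℂ) 0 with h | h
      · exact h
      apply eq_zero_of_natDegree_lt_card_of_eval_eq_zero _ hμlaminj hval
      have := (natDegree_lt_iff_degree_lt h).mpr (Polynomial.mem_degreeLT.mp t.2)
      simp only [Fintype.card_fin]
      omega
    exact Subtype.ext ht0
  have hrn := LinearMap.finrank_range_add_finrank_ker L.mulVecLin
  have hker : Module.finrank ℂ (LinearMap.ker L.mulVecLin) = n - d := by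
    rw [← hrange, LinearMap.finrank_range_of_inj hΨinj]
    rw [LinearEquiv.finrank_eq (Polynomial.degreeLTEquiv ℂ (n - d))]
    simp
  rw [Matrix.rank]
  rw [hker] at hrn
  simp only [Module.finrank_pi, Fintype.card_fin] at hrn
  omega
end
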